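/- Let a, b, c be real numbers with 0 ≤ a ≤ b, b < c and a² + b² ≤ c², and set k = √((b²−a²)/(c²−a²)). Then the area of the fundamental domain of the immersed surface, computed from the metric g = P(y) dx² + (2P(y)/(Q+2P(y))) dy², satisfies ∫₀^{2π} ∫₀^{2π} √( P(y) · 2P(y)/(Q + 2P(y)) ) dx dy = (4π/√(c²−a²)) · ( 2(c²−a²)·E(k) − (c²−a²−b²)·K(k) ), i.e. it equals S(a,b,c). -/

import Mathlib

open Real

/-- The complete elliptic integral of the first kind,
`K(k) = ∫₀¹ dα/(√(1−α²)·√(1−k²α²))`. -/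
noncomputable def ellipticK (k : ℝ) : ℝ :=
  ∫ α in (0:ℝ)..1, 1 / (Real.sqrt (1 - α ^ 2) * Real.sqrt (1 - k ^ 2 * α ^ 2))

/-- The complete elliptic integral of the second kind,
`E(k) = ∫₀¹ √(1−k²α²)/√(1−α²) dα`. -/
noncomputable def ellipticE (k : ℝ) : ℝ :=
  ∫ α in (0:ℝ)..1, Real.sqrt (1 - k ^ 2 * α ^ 2) / Real.sqrt (1 - α ^ 2)

/-- `P(y) = (c² + (b²−a²)·cos 2y)/2`. -/
noncomputable def Pm (a b c y : ℝ) : ℝ := (c ^ 2 + (b ^ 2 - a ^ 2) * Real.cos (2 * y)) / 2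

/-- `Q = c² − a² − b²`. -/
noncomputable def Qm (a b c : ℝ) : ℝ := c ^ 2 - a ^ 2 - b ^ 2

/-!
Since `Q + 2P(y) = 2(c² − a²)(1 − k² sin² y)`, the integrand equals
`√(c² − a²) · √(1 − k² sin² y) − Q / (2√(c² − a²)) / √(1 − k² sin² y)`.
This is `π`-periodic and symmetric about `π / 2`, so its integral over `[0, 2π]` is four times
its integral over `[0, π / 2]`, and the substitution `α = sin θ` turns the two resulting
integrals into `E(k)` and `K(k)`.
-/

open MeasureTheory Set intervalIntegral
open scoped Interval

theorem intervalIntegrable_one_div_sqrt_one_sub_sq :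
    IntervalIntegrable (fun x : ℝ => 1 / √(1 - x ^ 2)) volume (-1) 1 := by
  have h : (-1 : ℝ) ≤ 1 := by norm_num
  refine intervalIntegrable_deriv_of_nonneg (g := arcsin) continuous_arcsin.continuousOn
    (fun x hx => ?_) (fun x _ => by positivity)
  rw [min_eq_left h, max_eq_right h] at hx
  exact hasDerivAt_arcsin hx.1.ne' hx.2.ne

theorem integral_comp_sin_eq_integral_div_sqrt {f : ℝ → ℝ} (hf : ContinuousOn f (Icc 0 1)) :
    ∫ θ in 0..π / 2, f (sin θ) = ∫ α in 0..1, f α / √(1 - α ^ 2) := by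
  have hπ : 0 ≤ π / 2 := by positivity
  set g : ℝ → ℝ := fun α => f α / √(1 - α ^ 2)
  have hg : IntegrableOn g (Icc 0 1) := by
    have h := (intervalIntegrable_one_div_sqrt_one_sub_sq.mono_set
      (uIcc_subset_uIcc (by norm_num) (by norm_num))).continuousOn_mul
      (hf.mono (uIcc_of_le zero_le_one).subset)
    rw [intervalIntegrable_iff_integrableOn_Icc_of_le zero_le_one] at h
    simpa only [mul_one_div] using h
  have hg_cont : ContinuousOn g (Ico 0 1) := by
    refine (hf.mono Ico_subset_Icc_self).div (by fun_prop) fun α hα => ?_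
    exact (sqrt_pos.mpr (by nlinarith [hα.1, hα.2])).ne'
  have hsin_maps : MapsTo sin (Icc 0 (π / 2)) (Icc 0 1) := fun θ hθ =>
    ⟨sin_nonneg_of_nonneg_of_le_pi hθ.1 (by linarith [hθ.2, pi_pos]), sin_le_one θ⟩
  have hsin_maps' : MapsTo sin (Ioo 0 (π / 2)) (Ico 0 1) := fun θ hθ =>
    ⟨(hsin_maps (Ioo_subset_Icc_self hθ)).1, sin_pi_div_two ▸
      sin_lt_sin_of_lt_of_le_pi_div_two (by linarith [hθ.1, pi_pos]) le_rfl hθ.2⟩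
  -- the Jacobian `cos θ` cancels `√(1 - sin² θ)`, except at `θ = π / 2`
  have hcancel :
      EqOn (fun θ => cos θ • (g ∘ sin) θ) (fun θ => f (sin θ)) (Ico 0 (π / 2)) := by
    intro θ hθ
    have hcos : 0 < cos θ := cos_pos_of_mem_Ioo ⟨by linarith [hθ.1, pi_pos], hθ.2⟩
    simp only [g, smul_eq_mul, Function.comp_apply,
      ← cos_eq_sqrt_one_sub_sin_sq (by linarith [hθ.1, pi_pos]) hθ.2.le]
    field_simp
  have hg2 : IntegrableOn (fun θ => cos θ • (g ∘ sin) θ) [[0, π / 2]] := by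
    rw [uIcc_of_le hπ, integrableOn_Icc_iff_integrableOn_Ico]
    exact ((hf.comp continuous_sin.continuousOn hsin_maps).integrableOn_Icc.mono_set
      Ico_subset_Icc_self).congr_fun hcancel.symm measurableSet_Ico
  have key := integral_deriv_smul_comp''' (a := 0) (b := π / 2) (f := sin) (f' := cos) (g := g)
    continuous_sin.continuousOn (fun x _ => (hasDerivAt_sin x).hasDerivWithinAt)
    (hg_cont.mono ?_) (hg.mono_set ?_) hg2
  · rw [sin_zero, sin_pi_div_two] at key
    rw [← key, integral_of_le hπ, integral_of_le hπ, integral_Ioc_eq_integral_Ioo,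
      integral_Ioc_eq_integral_Ioo]
    exact setIntegral_congr_fun measurableSet_Ioo fun θ hθ =>
      (hcancel (Ioo_subset_Ico_self hθ)).symm
  · rw [min_eq_left hπ, max_eq_right hπ]
    exact hsin_maps'.image_subset
  · rw [uIcc_of_le hπ]
    exact hsin_maps.image_subset

theorem integral_zero_eq_two_mul_integral_half {f : ℝ → ℝ} {T : ℝ}
    (hsymm : ∀ x, f (T - x) = f x) (hf : IntervalIntegrable f volume 0 T) :
    ∫ x in 0..T, f x = 2 * ∫ x in 0..T / 2, f x := by
  have hT : T - T / 2 = T / 2 := by ring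
  have hmid : T / 2 ∈ [[0, T]] := by
    rcases le_total 0 T with h | h
    · exact mem_uIcc.mpr (.inl ⟨by linarith, by linarith⟩)
    · exact mem_uIcc.mpr (.inr ⟨by linarith, by linarith⟩)
  have hsecond : ∫ x in T / 2..T, f x = ∫ x in 0..T / 2, f x := by
    simpa [hT, hsymm] using (integral_comp_sub_left (a := 0) (b := T / 2) f T).symm
  rw [← integral_add_adjacent_intervals (hf.mono_set (uIcc_subset_uIcc left_mem_uIcc hmid))
    (hf.mono_set (uIcc_subset_uIcc hmid right_mem_uIcc)), hsecond, two_mul]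

theorem integral_two_periods_eq_four_mul_integral_quarter {f : ℝ → ℝ} {T : ℝ}
    (hper : Function.Periodic f T) (hsymm : ∀ x, f (T - x) = f x) (hf : Continuous f) :
    ∫ x in 0..2 * T, f x = 4 * ∫ x in 0..T / 2, f x := by
  have h := hper.intervalIntegral_add_zsmul_eq 2 0 fun _ _ => hf.intervalIntegrable _ _
  simp only [zero_add] at h
  rw [show (2 : ℤ) • T = 2 * T by norm_num] at h
  rw [h, integral_zero_eq_two_mul_integral_half hsymm (hf.intervalIntegrable _ _)]
  norm_num
  ring

theorem one_sub_sq_mul_sin_sq_pos {k : ℝ} (hk : k ^ 2 < 1) (θ : ℝ) :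
    0 < 1 - k ^ 2 * sin θ ^ 2 := by
  nlinarith [sin_sq_le_one θ, sq_nonneg (sin θ), sq_nonneg k]

theorem ellipticE_eq_integral_sin (k : ℝ) :
    ellipticE k = ∫ θ in 0..π / 2, √(1 - k ^ 2 * sin θ ^ 2) :=
  (integral_comp_sin_eq_integral_div_sqrt (f := fun α => √(1 - k ^ 2 * α ^ 2))
    (by fun_prop)).symm

theorem ellipticK_eq_integral_sin {k : ℝ} (hk : k ^ 2 < 1) :
    ellipticK k = ∫ θ in 0..π / 2, 1 / √(1 - k ^ 2 * sin θ ^ 2) := by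
  have hf : ContinuousOn (fun α : ℝ => 1 / √(1 - k ^ 2 * α ^ 2)) (Icc 0 1) := by
    refine continuousOn_const.div (by fun_prop) fun α hα => (sqrt_pos.mpr ?_).ne'
    nlinarith [mul_le_mul_of_nonneg_left (pow_le_one₀ hα.1 hα.2 : α ^ 2 ≤ 1) (sq_nonneg k)]
  rw [integral_comp_sin_eq_integral_div_sqrt hf, ellipticK]
  exact integral_congr fun α _ => by simp only [div_div, mul_comm]

theorem integral_zero_two_pi_eq_four_mul_elliptic {k : ℝ} (hk : k ^ 2 < 1) (s C : ℝ) :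
    ∫ y in 0..2 * π, (s * √(1 - k ^ 2 * sin y ^ 2) - C / √(1 - k ^ 2 * sin y ^ 2)) =
      4 * (s * ellipticE k - C * ellipticK k) := by
  have hne : ∀ y, √(1 - k ^ 2 * sin y ^ 2) ≠ 0 := fun y =>
    (sqrt_pos.mpr (one_sub_sq_mul_sin_sq_pos hk y)).ne'
  have hE : Continuous fun y => s * √(1 - k ^ 2 * sin y ^ 2) := by fun_prop
  have hK : Continuous fun y => C * (1 / √(1 - k ^ 2 * sin y ^ 2)) :=
    continuous_const.mul (continuous_const.div (by fun_prop) hne)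
  have hF : Continuous fun y =>
      s * √(1 - k ^ 2 * sin y ^ 2) - C * (1 / √(1 - k ^ 2 * sin y ^ 2)) := hE.sub hK
  simp_rw [div_eq_mul_one_div C]
  rw [integral_two_periods_eq_four_mul_integral_quarter (fun y => by simp [sin_add_pi])
      (fun y => by simp [sin_pi_sub]) hF,
    integral_sub (hE.intervalIntegrable _ _) (hK.intervalIntegrable _ _),
    intervalIntegral.integral_const_mul, intervalIntegral.integral_const_mul,
    ellipticE_eq_integral_sin, ellipticK_eq_integral_sin hk]

theorem Qm_add_two_mul_Pm (a b c y : ℝ) :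
    Qm a b c + 2 * Pm a b c y = 2 * (c ^ 2 - a ^ 2) - 2 * (b ^ 2 - a ^ 2) * sin y ^ 2 := by
  rw [Qm, Pm, cos_two_mul, cos_sq']
  ring

theorem sqrt_mul_two_mul_div_eq {P Q s t : ℝ} (hP : 0 ≤ P) (hs : 0 < s) (ht : 0 < t)
    (h : Q + 2 * P = 2 * s ^ 2 * t ^ 2) :
    √(P * (2 * P / (Q + 2 * P))) = s * t - Q / (2 * s) / t := by
  have hsq : P * (2 * P / (Q + 2 * P)) = (P / (s * t)) ^ 2 := by
    rw [h]
    field_simp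
  rw [hsq, sqrt_sq (by positivity)]
  field_simp
  linear_combination h

theorem sqrt_area_density_eq {a b c k : ℝ} (ha : a ^ 2 < c ^ 2) (hb : b ^ 2 < c ^ 2)
    (hk : k ^ 2 = (b ^ 2 - a ^ 2) / (c ^ 2 - a ^ 2)) (y : ℝ) :
    √(Pm a b c y * (2 * Pm a b c y / (Qm a b c + 2 * Pm a b c y))) =
      √(c ^ 2 - a ^ 2) * √(1 - k ^ 2 * sin y ^ 2) -
        Qm a b c / (2 * √(c ^ 2 - a ^ 2)) / √(1 - k ^ 2 * sin y ^ 2) := by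
  have hA : 0 < c ^ 2 - a ^ 2 := by linarith
  have hk1 : k ^ 2 < 1 := by rw [hk, div_lt_one hA]; linarith
  have hP : 0 ≤ Pm a b c y := by
    rw [Pm]
    nlinarith [neg_one_le_cos (2 * y), cos_le_one (2 * y), sq_nonneg a, sq_nonneg b]
  refine sqrt_mul_two_mul_div_eq hP (sqrt_pos.mpr hA)
    (sqrt_pos.mpr (one_sub_sq_mul_sin_sq_pos hk1 y)) ?_
  rw [sq_sqrt hA.le, sq_sqrt (one_sub_sq_mul_sin_sq_pos hk1 y).le, Qm_add_two_mul_Pm, hk]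
  field_simp

theorem area_fundamental_domain_general (a b c : ℝ) (ha : 0 ≤ a) (hab : a ≤ b) (hbc : b < c) :
    ∫ y in (0:ℝ)..(2 * Real.pi), ∫ _x in (0:ℝ)..(2 * Real.pi),
        Real.sqrt (Pm a b c y * (2 * Pm a b c y / (Qm a b c + 2 * Pm a b c y))) =
      4 * Real.pi / Real.sqrt (c ^ 2 - a ^ 2) *
        (2 * (c ^ 2 - a ^ 2) * ellipticE (Real.sqrt ((b ^ 2 - a ^ 2) / (c ^ 2 - a ^ 2))) -
          (c ^ 2 - a ^ 2 - b ^ 2) * ellipticK (Real.sqrt ((b ^ 2 - a ^ 2) / (c ^ 2 - a ^ 2)))) := by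
  have hab2 : a ^ 2 ≤ b ^ 2 := pow_le_pow_left₀ ha hab 2
  have hbc2 : b ^ 2 < c ^ 2 := pow_lt_pow_left₀ hbc (ha.trans hab) two_ne_zero
  have hA : 0 < c ^ 2 - a ^ 2 := by linarith
  set k := √((b ^ 2 - a ^ 2) / (c ^ 2 - a ^ 2))
  have hk : k ^ 2 = (b ^ 2 - a ^ 2) / (c ^ 2 - a ^ 2) := sq_sqrt (by positivity)
  have hk1 : k ^ 2 < 1 := by rw [hk, div_lt_one hA]; linarith
  have hsA : √(c ^ 2 - a ^ 2) ^ 2 = c ^ 2 - a ^ 2 := sq_sqrt hA.le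
  calc _ = ∫ y in 0..2 * π, 2 * π * (√(c ^ 2 - a ^ 2) * √(1 - k ^ 2 * sin y ^ 2) -
          Qm a b c / (2 * √(c ^ 2 - a ^ 2)) / √(1 - k ^ 2 * sin y ^ 2)) :=
        integral_congr fun y _ => by
          rw [intervalIntegral.integral_const, smul_eq_mul, sub_zero,
            sqrt_area_density_eq (by linarith) hbc2 hk]
    _ = 2 * π * (4 * (√(c ^ 2 - a ^ 2) * ellipticE k -
          Qm a b c / (2 * √(c ^ 2 - a ^ 2)) * ellipticK k)) := by
        rw [intervalIntegral.integral_const_mul, integral_zero_two_pi_eq_four_mul_elliptic hk1]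
    _ = _ := by
        rw [Qm]
        field_simp
        linear_combination (2 * ellipticE k) * hsA

/-- Let `0 ≤ a ≤ b`, `b < c`, `a² + b² ≤ c²` and
`k = √((b²−a²)/(c²−a²))`. Then the area of the fundamental domain, computed from the
metric `g = P(y)dx² + (2P(y)/(Q+2P(y)))dy²`, equals
`S(a,b,c) = (4π/√(c²−a²))·(2(c²−a²)·E(k) − (c²−a²−b²)·K(k))`. -/
theorem area_fundamental_domain (a b c : ℝ) (ha : 0 ≤ a) (hab : a ≤ b) (hbc : b < c)
    (habc : a ^ 2 + b ^ 2 ≤ c ^ 2) :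
    ∫ y in (0:ℝ)..(2 * Real.pi), ∫ _x in (0:ℝ)..(2 * Real.pi),
        Real.sqrt (Pm a b c y * (2 * Pm a b c y / (Qm a b c + 2 * Pm a b c y))) =
      4 * Real.pi / Real.sqrt (c ^ 2 - a ^ 2) *
        (2 * (c ^ 2 - a ^ 2) * ellipticE (Real.sqrt ((b ^ 2 - a ^ 2) / (c ^ 2 - a ^ 2))) -
          (c ^ 2 - a ^ 2 - b ^ 2) * ellipticK (Real.sqrt ((b ^ 2 - a ^ 2) / (c ^ 2 - a ^ 2)))) :=
  area_fundamental_domain_general a b c ha hab hbc
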